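/- Let n₁, n₂, l₁, l₂ > 0 with n₁ ≠ n₂, A = (n₁/n₂ + n₂/n₁)/2 + 1, B = (n₁/n₂ + n₂/n₁)/2 − 1, a = n₁l₁ + n₂l₂, b = n₁l₁ − n₂l₂, f(ν) = A cos(aν) − B cos(bν). Assume b ≠ 0 and a/b is irrational. Then there exists δ > 0 such that for every M > 0 there exists ν > M with f(μ) > 2 for all μ ∈ [ν − δ, ν + δ]. (One may take δ = (A + B − 2)/(2(Aa + B|b|)), since |f′(μ)| ≤ Aa + B|b| for all μ.) Hence the lengths of the spectral gaps of the two-layer periodic optical medium do not vanish as the frequency tends to infinity. -/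

import Mathlib

/-!
Since `A - B = 2` and `A + B = n₁/n₂ + n₂/n₁ > 2`, the value `A + B` of `f` at a point where
`cos (b ν) = -1` and `cos (a ν) = 1` exceeds `2` by a fixed margin. Such points do not exist
exactly, but because `a / b` is irrational the multiples `m • 2π(a/b)` are dense in the circle,
and infinitely many of them (hence some with `|m|` large) come close enough: at
`ν = (2m + 1)π / b` the first cosine is exactly `-1` and the second is close to `1`.
As `f` is Lipschitz with constant `|A||a| + |B||b|`, `f > 2` persists on an interval of fixed
radius around each such `ν`.
-/

open Real Filter Topology

-- With `T1Space`, connectedness rules out isolated points, as `Dense.sdiff_finite` requires.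
instance : Nontrivial Real.Angle := ⟨⟨π, 0, Real.Angle.pi_ne_zero⟩⟩
instance : ConnectedSpace Real.Angle := inferInstanceAs (ConnectedSpace (AddCircle (2 * π)))

theorem DenseRange.infinite_preimage {X ι : Type*} [TopologicalSpace X] [T1Space X]
    [∀ x : X, NeBot (𝓝[≠] x)] {u : ι → X} (hu : DenseRange u) {U : Set X} (hU : IsOpen U)
    (hne : U.Nonempty) : (u ⁻¹' U).Infinite := by
  intro hfin
  obtain ⟨_, hxU, ⟨i, rfl⟩, hi⟩ := (hu.sdiff_finite (hfin.image u)).inter_open_nonempty U hU hne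
  exact hi ⟨i, hxU, rfl⟩

theorem Irrational.infinite_setOf_zsmul_mem {θ : ℝ} (hθ : Irrational θ) {U : Set Real.Angle}
    (hU : IsOpen U) (hne : U.Nonempty) :
    {m : ℤ | m • ((2 * π * θ : ℝ) : Real.Angle) ∈ U}.Infinite := by
  have hdense : DenseRange (fun m : ℤ => m • ((2 * π * θ : ℝ) : Real.Angle)) :=
    AddCircle.denseRange_zsmul_coe_iff.2 (by rwa [mul_div_cancel_left₀ _ (by positivity)])
  exact hdense.infinite_preimage hU hne

theorem two_lt_div_add_div {x y : ℝ} (hx : 0 < x) (hy : 0 < y) (hne : x ≠ y) :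
    2 < x / y + y / x := by
  have hsq : x / y + y / x - 2 = (x - y) ^ 2 / (x * y) := by field_simp; ring
  have : 0 < (x - y) ^ 2 / (x * y) := by
    have := sub_ne_zero.2 hne
    positivity
  linarith

theorem abs_cos_combination_sub_le (A B a b μ ν : ℝ) :
    |(A * cos (a * μ) - B * cos (b * μ)) - (A * cos (a * ν) - B * cos (b * ν))| ≤
      (|A| * |a| + |B| * |b|) * |μ - ν| := by
  have term (C c : ℝ) : |C * cos (c * μ) - C * cos (c * ν)| ≤ |C| * |c| * |μ - ν| := by
    calc |C * cos (c * μ) - C * cos (c * ν)| = |C| * |cos (c * μ) - cos (c * ν)| := by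
          rw [← mul_sub, abs_mul]
      _ ≤ |C| * |c * μ - c * ν| :=
          mul_le_mul_of_nonneg_left (abs_cos_sub_cos_le _ _) (abs_nonneg _)
      _ = |C| * |c| * |μ - ν| := by rw [← mul_sub, abs_mul, mul_assoc]
  calc _ = |(A * cos (a * μ) - A * cos (a * ν)) - (B * cos (b * μ) - B * cos (b * ν))| := by
        ring_nf
    _ ≤ |A * cos (a * μ) - A * cos (a * ν)| + |B * cos (b * μ) - B * cos (b * ν)| := abs_sub _ _
    _ ≤ |A| * |a| * |μ - ν| + |B| * |b| * |μ - ν| := add_le_add (term A a) (term B b)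
    _ = _ := by ring

theorem exists_gt_cos_mul_eq_neg_one_and_cos_mul_gt {a b : ℝ} (hb : b ≠ 0)
    (hirr : Irrational (a / b)) {ε : ℝ} (hε : 0 < ε) (M : ℝ) :
    ∃ ν > M, cos (b * ν) = -1 ∧ 1 - ε < cos (a * ν) := by
  set θ := a / b
  set N : ℕ := ⌈M * |b| / π⌉₊
  let U : Set Real.Angle := {x | 1 - ε < (x + ((π * θ : ℝ) : Real.Angle)).cos}
  have hU : IsOpen U :=
    isOpen_lt continuous_const (Real.Angle.continuous_cos.comp (continuous_add_const _))
  have hUne : U.Nonempty := ⟨((-(π * θ) : ℝ) : Real.Angle), by simp [U, hε]⟩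
  obtain ⟨m, hmU, hmN⟩ :=
    (hirr.infinite_setOf_zsmul_mem hU hUne).exists_notMem_finset (Finset.Icc (-(N : ℤ)) N)
  have hmN : (N : ℝ) + 1 ≤ |(m : ℝ)| := by
    rw [Finset.mem_Icc, ← abs_le, not_le] at hmN
    exact_mod_cast hmN
  set ν₀ := (2 * m + 1) * π / b
  have hcos_abs (c : ℝ) : cos (c * |ν₀|) = cos (c * ν₀) := by
    rcases abs_choice ν₀ with h | h <;> simp [h]
  refine ⟨|ν₀|, ?_, ?_, ?_⟩
  · have hN : M * |b| / π ≤ N := Nat.le_ceil _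
    rw [div_le_iff₀ pi_pos] at hN
    have h2m : 2 * ((N : ℝ) + 1) - 1 ≤ |2 * (m : ℝ) + 1| := by
      have := abs_sub_abs_le_abs_sub (2 * (m : ℝ)) (-1)
      rw [abs_mul, abs_two, abs_neg, abs_one, sub_neg_eq_add] at this
      linarith
    rw [abs_div, abs_mul, abs_of_pos pi_pos, gt_iff_lt, lt_div_iff₀ (abs_pos.2 hb)]
    nlinarith [pi_pos, (N.cast_nonneg : (0 : ℝ) ≤ N)]
  · rw [hcos_abs, show b * ν₀ = m * (2 * π) + π by simp only [ν₀]; field_simp]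
    exact cos_int_mul_two_pi_add_pi m
  · rw [hcos_abs, show a * ν₀ = m * (2 * π * θ) + π * θ by simp only [ν₀, θ]; field_simp]
    simp only [Set.mem_ofPred_eq, U] at hmU
    rwa [← Real.Angle.coe_zsmul, ← Real.Angle.coe_add, Real.Angle.cos_coe, zsmul_eq_mul] at hmU

theorem stmt_2_general (n₁ n₂ : ℝ) (hn₁ : 0 < n₁) (hn₂ : 0 < n₂)
    (hne : n₁ ≠ n₂)
    (A B a b : ℝ)
    (hA : A = (n₁ / n₂ + n₂ / n₁) / 2 + 1)
    (hB : B = (n₁ / n₂ + n₂ / n₁) / 2 - 1)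
    (hb0 : b ≠ 0) (hirr : Irrational (a / b))
    (f : ℝ → ℝ) (hf : ∀ ν, f ν = A * Real.cos (a * ν) - B * Real.cos (b * ν)) :
    ∃ δ > 0, ∀ M > 0, ∃ ν > M, ∀ μ ∈ Set.Icc (ν - δ) (ν + δ), f μ > 2 := by
  have hAB : 2 < A + B := by rw [hA, hB]; linarith [two_lt_div_add_div hn₁ hn₂ hne]
  have hB_pos : 0 < B := by linarith [show A = B + 2 by rw [hA, hB]; ring]
  have hA_pos : 0 < A := by linarith
  set L := |A| * |a| + |B| * |b|
  have hL : 0 < L := add_pos_of_nonneg_of_pos (by positivity) (by positivity)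
  set η := (A + B - 2) / 4
  have hη : 0 < η := by positivity
  refine ⟨η / L, by positivity, fun M _ => ?_⟩
  obtain ⟨ν, hνM, hcos_b, hcos_a⟩ :=
    exists_gt_cos_mul_eq_neg_one_and_cos_mul_gt hb0 hirr (div_pos hη hA_pos) M
  refine ⟨ν, hνM, fun μ hμ => ?_⟩
  have hfν : A + B - η < f ν := by
    have := mul_lt_mul_of_pos_left hcos_a hA_pos
    rw [mul_sub, mul_one, mul_div_cancel₀ _ hA_pos.ne'] at this
    rw [hf, hcos_b]
    linarith
  have hfμ : |f μ - f ν| ≤ η := by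
    rw [hf, hf]
    calc _ ≤ L * |μ - ν| := abs_cos_combination_sub_le A B a b μ ν
      _ ≤ L * (η / L) := by
        gcongr
        exact abs_sub_le_iff.2 ⟨by linarith [hμ.2], by linarith [hμ.1]⟩
      _ = η := mul_div_cancel₀ _ hL.ne'
  linarith [(abs_le.1 hfμ).1, show 4 * η = A + B - 2 by simp only [η]; ring]

theorem stmt_2 (n₁ n₂ l₁ l₂ : ℝ) (hn₁ : 0 < n₁) (hn₂ : 0 < n₂)
    (hl₁ : 0 < l₁) (hl₂ : 0 < l₂) (hne : n₁ ≠ n₂)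
    (A B a b : ℝ)
    (hA : A = (n₁ / n₂ + n₂ / n₁) / 2 + 1)
    (hB : B = (n₁ / n₂ + n₂ / n₁) / 2 - 1)
    (ha : a = n₁ * l₁ + n₂ * l₂)
    (hb : b = n₁ * l₁ - n₂ * l₂)
    (hb0 : b ≠ 0) (hirr : Irrational (a / b))
    (f : ℝ → ℝ) (hf : ∀ ν, f ν = A * Real.cos (a * ν) - B * Real.cos (b * ν)) :
    ∃ δ > 0, ∀ M > 0, ∃ ν > M, ∀ μ ∈ Set.Icc (ν - δ) (ν + δ), f μ > 2 :=
  stmt_2_general n₁ n₂ hn₁ hn₂ hne A B a b hA hB hb0 hirr f hf
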